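/- arXiv:2509.24277 — 5 statements merged into one kernel-verified Lean document; each statement's English description precedes it below -/
import Mathlib

section
/- Let J : ℝ^n → ℝ be twice continuously differentiable and coercive with infimum J* (attained), and for h ≥ 0 let L̄(h) = sup{ ‖∇²J(z)‖ : J(z) ≤ J* + h }. Fix h ≥ 0 with L̄(h) > 0 and let z ∈ ℝ^n satisfy J(z) ≤ J* + h. Then for every s ∈ [0, 2/L̄(h)], the point z − s∇J(z) remains in the sublevel set, i.e., J(z − s∇J(z)) ≤ J* + h. -/
open scoped RealInnerProductSpace

/-!
Write `g = ∇J(z)` and `L = L̄(h)`. As long as the segment from `z` to `z - t g` stays in the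
sublevel set `{J ≤ J* + h}`, where the Hessian is bounded by `L`, the descent lemma gives
`J(z - t g) ≤ J(z) - t (1 - L t / 2) ‖g‖²`, which is `< J(z)` for `0 < t < 2 / L`. Hence the ray
cannot leave the sublevel set before time `2 / L`: continuous induction along `t`, started at
`t = 0` by the derivative `-‖g‖² < 0`. Coercivity makes the sublevel set compact, so the
supremum `L̄(h)` does bound the Hessian there.
-/

open Set Filter Topology

theorem norm_fderiv_fderiv_eq_norm_iteratedFDeriv_two {𝕜 E F : Type*} [NontriviallyNormedField 𝕜]
    [NormedAddCommGroup E] [NormedSpace 𝕜 E] [NormedAddCommGroup F] [NormedSpace 𝕜 F]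
    (f : E → F) (x : E) :
    ‖fderiv 𝕜 (fderiv 𝕜 f) x‖ = ‖iteratedFDeriv 𝕜 2 f x‖ := by
  rw [← norm_iteratedFDeriv_one, norm_iteratedFDeriv_fderiv]

section Descent

variable {E : Type*} [NormedAddCommGroup E] [NormedSpace ℝ E]

theorem Convex.le_add_fderiv_add_of_norm_fderiv_fderiv_le {f : E → ℝ} {s : Set E} {L : ℝ}
    (hs : Convex ℝ s) (hf : ∀ x ∈ s, DifferentiableAt ℝ f x)
    (hf' : ∀ x ∈ s, DifferentiableAt ℝ (fderiv ℝ f) x)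
    (hL : ∀ x ∈ s, ‖fderiv ℝ (fderiv ℝ f) x‖ ≤ L) {x y : E} (hx : x ∈ s) (hy : y ∈ s) :
    f y ≤ f x + fderiv ℝ f x (y - x) + L / 2 * ‖y - x‖ ^ 2 := by
  set v := y - x
  have hmem : ∀ t ∈ Icc (0 : ℝ) 1, x + t • v ∈ s := fun t ht => hs.add_smul_sub_mem hx hy ht
  set ψ : ℝ → ℝ := fun t => f (x + t • v) - t * fderiv ℝ f x v - L / 2 * ‖v‖ ^ 2 * t ^ 2
  have hψ : ∀ t ∈ Icc (0 : ℝ) 1,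
      HasDerivAt ψ (fderiv ℝ f (x + t • v) v - fderiv ℝ f x v - L * ‖v‖ ^ 2 * t) t := by
    intro t ht
    have hline : HasDerivAt (fun t : ℝ => x + t • v) v t := by
      simpa using ((hasDerivAt_id t).smul_const v).const_add x
    refine (((hf _ (hmem t ht)).hasFDerivAt.comp_hasDerivAt t hline).sub
      ((hasDerivAt_id t).mul_const (fderiv ℝ f x v)) |>.sub
      ((hasDerivAt_pow 2 t).const_mul (L / 2 * ‖v‖ ^ 2))).congr_deriv ?_
    simp only [one_mul, Nat.cast_ofNat]
    ring
  have hψ_nonpos : ∀ t ∈ Icc (0 : ℝ) 1,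
      fderiv ℝ f (x + t • v) v - fderiv ℝ f x v - L * ‖v‖ ^ 2 * t ≤ 0 := by
    intro t ht
    have hLip := hs.norm_image_sub_le_of_norm_fderiv_le hf' hL hx (hmem t ht)
    rw [sub_nonpos]
    calc fderiv ℝ f (x + t • v) v - fderiv ℝ f x v
        = (fderiv ℝ f (x + t • v) - fderiv ℝ f x) v := rfl
      _ ≤ ‖fderiv ℝ f (x + t • v) - fderiv ℝ f x‖ * ‖v‖ :=
        (Real.le_norm_self _).trans (ContinuousLinearMap.le_opNorm _ _)
      _ ≤ L * ‖x + t • v - x‖ * ‖v‖ := by gcongr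
      _ = L * ‖v‖ ^ 2 * t := by
        rw [add_sub_cancel_left, norm_smul, Real.norm_of_nonneg ht.1]; ring
  have hanti : AntitoneOn ψ (Icc 0 1) :=
    antitoneOn_of_hasDerivWithinAt_nonpos (convex_Icc 0 1)
      (fun t ht => (hψ t ht).continuousAt.continuousWithinAt)
      (fun t ht => (hψ t (interior_subset ht)).hasDerivWithinAt)
      (fun t ht => hψ_nonpos t (interior_subset ht))
  have hψ_le := hanti (left_mem_Icc.2 zero_le_one) (right_mem_Icc.2 zero_le_one) zero_le_one
  simp only [ψ, zero_smul, add_zero, one_smul, zero_mul, sub_zero, one_mul, one_pow, v,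
    add_sub_cancel] at hψ_le
  linarith

end Descent

theorem eventually_nhdsGT_lt_of_hasDerivWithinAt_neg {φ : ℝ → ℝ} {φ' x : ℝ}
    (hφ : HasDerivWithinAt φ φ' (Ioi x) x) (hneg : φ' < 0) : ∀ᶠ t in 𝓝[>] x, φ t < φ x := by
  filter_upwards [hφ.limsup_slope_le' (lt_irrefl x) hneg, self_mem_nhdsWithin] with t hslope ht
  rw [slope_def_field, div_neg_iff] at hslope
  have : x < t := ht
  rcases hslope with ⟨-, h⟩ | ⟨h, -⟩ <;> linarith

section GradientStep

variable {E : Type*} [NormedAddCommGroup E] [InnerProductSpace ℝ E] [CompleteSpace E]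
  {f : E → ℝ} {z : E}

theorem hasDerivAt_apply_sub_smul_gradient_zero (hf : DifferentiableAt ℝ f z) :
    HasDerivAt (fun t : ℝ => f (z - t • gradient f z)) (-‖gradient f z‖ ^ 2) 0 := by
  have hline : HasDerivAt (fun t : ℝ => z - t • gradient f z) (-gradient f z) 0 := by
    simpa using ((hasDerivAt_id (0 : ℝ)).smul_const (gradient f z)).const_sub z
  refine (hf.hasFDerivAt.comp_hasDerivAt_of_eq 0 hline (by simp)).congr_deriv ?_
  rw [map_neg, ← inner_gradient_left, real_inner_self_eq_norm_sq]

theorem apply_sub_smul_gradient_le_sub (hf : ContDiff ℝ 2 f) {L t : ℝ} (ht : 0 ≤ t)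
    (hL : ∀ u ∈ Icc 0 t, ‖fderiv ℝ (fderiv ℝ f) (z - u • gradient f z)‖ ≤ L) :
    f (z - t • gradient f z) ≤ f z - t * (1 - L * t / 2) * ‖gradient f z‖ ^ 2 := by
  set g := gradient f z
  have hseg : ∀ x ∈ segment ℝ z (z - t • g), ∃ u ∈ Icc 0 t, x = z - u • g := by
    rw [segment_eq_image']
    rintro _ ⟨θ, hθ, rfl⟩
    exact ⟨θ * t, ⟨by nlinarith [hθ.1], by nlinarith [hθ.2]⟩, by
      dsimp only; module⟩
  have hdescent := (convex_segment z (z - t • g)).le_add_fderiv_add_of_norm_fderiv_fderiv_le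
    (fun x _ => (hf.differentiable (by norm_num)).differentiableAt)
    (fun x _ =>
      ((hf.fderiv_right (m := 1) (by norm_num)).differentiable (by norm_num)).differentiableAt)
    (fun x hx => by obtain ⟨u, hu, rfl⟩ := hseg x hx; exact hL u hu)
    (left_mem_segment ℝ _ _) (right_mem_segment ℝ _ _)
  rw [sub_sub_cancel_left, map_neg, map_smul, ← inner_gradient_left, real_inner_self_eq_norm_sq,
    norm_neg, norm_smul, Real.norm_of_nonneg ht, smul_eq_mul] at hdescent
  linarith

theorem apply_sub_smul_gradient_le_of_norm_fderiv_fderiv_le (hf : ContDiff ℝ 2 f) {c L : ℝ}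
    (hL : 0 < L) (hH : ∀ x, f x ≤ c → ‖fderiv ℝ (fderiv ℝ f) x‖ ≤ L) (hz : f z ≤ c) :
    ∀ s ∈ Icc 0 (2 / L), f (z - s • gradient f z) ≤ c := by
  set g := gradient f z
  rcases eq_or_ne g 0 with hg | hg
  · intro s _
    simpa [hg] using hz
  set φ : ℝ → ℝ := fun t => f (z - t • g)
  have hφ : Continuous φ := hf.continuous.comp (by fun_prop)
  have hz0 : φ 0 ≤ c := by simpa [φ] using hz
  have key : Icc 0 (2 / L) ⊆ φ ⁻¹' Iic c := by
    refine IsClosed.Icc_subset_of_forall_mem_nhdsGT_of_Icc_subset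
      ((isClosed_Iic.preimage hφ).inter isClosed_Icc) hz0 fun t ht hhist => ?_
    rcases ht.1.eq_or_lt with rfl | htpos
    · have hderiv : HasDerivAt φ (-‖g‖ ^ 2) 0 :=
        hasDerivAt_apply_sub_smul_gradient_zero (hf.differentiable (by norm_num)).differentiableAt
      filter_upwards [eventually_nhdsGT_lt_of_hasDerivWithinAt_neg hderiv.hasDerivWithinAt
        (neg_lt_zero.2 (pow_pos (norm_pos_iff.2 hg) 2))] with u hu
      exact (hu.trans_le hz0).le
    · have hdescent := apply_sub_smul_gradient_le_sub hf ht.1 fun u hu => hH _ (hhist hu)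
      have hLt : L * t < 2 := by rw [← lt_div_iff₀' hL]; exact ht.2
      have hdecrease : 0 < t * (1 - L * t / 2) * ‖g‖ ^ 2 := by
        have := norm_pos_iff.2 hg
        have : 0 < 1 - L * t / 2 := by linarith
        positivity
      have hlt : φ t < c := by
        change f (z - t • g) < c
        linarith
      exact nhdsWithin_le_nhds (hφ.continuousAt.preimage_mem_nhds (Iic_mem_nhds hlt))
  exact fun s hs => key hs

end GradientStep

theorem Continuous.isCompact_sublevel_of_tendsto_cocompact {X α : Type*} [TopologicalSpace X]
    [TopologicalSpace α] [LinearOrder α] [ClosedIicTopology α] [NoMaxOrder α] {f : X → α}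
    (hf : Continuous f) (hcoer : Tendsto f (cocompact X) atTop) (c : α) :
    IsCompact {x | f x ≤ c} := by
  obtain ⟨K, hK, hsub⟩ := mem_cocompact'.1 (hcoer.eventually (eventually_gt_atTop c))
  exact hK.of_isClosed_subset (isClosed_Iic.preimage hf) fun x hx => hsub (not_lt.2 hx)

theorem stmt_1_general (n : ℕ) (J : EuclideanSpace ℝ (Fin n) → ℝ)
    (hJ : ContDiff ℝ 2 J)
    (hcoer : Filter.Tendsto J (Filter.cocompact (EuclideanSpace ℝ (Fin n))) Filter.atTop)
    (Jstar : ℝ)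
    (Lbar : ℝ → ℝ)
    (hLbar : ∀ h : ℝ, 0 ≤ h →
      Lbar h = sSup ((fun z => ‖iteratedFDeriv ℝ 2 J z‖) '' {z | J z ≤ Jstar + h}))
    (h : ℝ) (hh : 0 ≤ h) (hLpos : 0 < Lbar h)
    (z : EuclideanSpace ℝ (Fin n)) (hz : J z ≤ Jstar + h) :
    ∀ s ∈ Set.Icc (0 : ℝ) (2 / Lbar h), J (z - s • gradient J z) ≤ Jstar + h := by
  have hsublevel := hJ.continuous.isCompact_sublevel_of_tendsto_cocompact hcoer (Jstar + h)
  refine apply_sub_smul_gradient_le_of_norm_fderiv_fderiv_le hJ hLpos (fun x hx => ?_) hz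
  rw [norm_fderiv_fderiv_eq_norm_iteratedFDeriv_two, hLbar h hh]
  exact le_csSup (hsublevel.image (hJ.continuous_iteratedFDeriv le_rfl).norm).bddAbove
    ⟨x, hx, rfl⟩

/-- with `J` twice continuously differentiable and coercive with attained
infimum `Jstar`, and `Lbar h` the sup of the Hessian operator norm over the sublevel set
`{z | J z ≤ Jstar + h}`, if `J z ≤ Jstar + h` and `Lbar h > 0`, then for all
`s ∈ [0, 2 / Lbar h]` the point `z − s ∇J(z)` stays in the sublevel set. -/
theorem stmt_1 (n : ℕ) (J : EuclideanSpace ℝ (Fin n) → ℝ)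
    (hJ : ContDiff ℝ 2 J)
    (hcoer : Filter.Tendsto J (Filter.cocompact (EuclideanSpace ℝ (Fin n))) Filter.atTop)
    (Jstar : ℝ) (hlb : ∀ z, Jstar ≤ J z) (hatt : ∃ z, J z = Jstar)
    (Lbar : ℝ → ℝ)
    (hLbar : ∀ h : ℝ, 0 ≤ h →
      Lbar h = sSup ((fun z => ‖iteratedFDeriv ℝ 2 J z‖) '' {z | J z ≤ Jstar + h}))
    (h : ℝ) (hh : 0 ≤ h) (hLpos : 0 < Lbar h)
    (z : EuclideanSpace ℝ (Fin n)) (hz : J z ≤ Jstar + h) :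
    ∀ s ∈ Set.Icc (0 : ℝ) (2 / Lbar h), J (z - s • gradient J z) ≤ Jstar + h :=
  stmt_1_general n J hJ hcoer Jstar Lbar hLbar h hh hLpos z hz
end

section
/- Let J : ℝ^n → ℝ be differentiable with globally L-Lipschitz gradient (L > 0) and bounded below with infimum J*. Let η > 0, c > 0, let λ₁ satisfy 0 < λ₁ ≤ min{ 1/(2η + c), 1/(2L), c/(2(ηL + c²)) }, and set λ₂ = (1 − λ₁ c)/η. Define V(z, v) = J(z) − J* + λ₁ ⟨v, ∇J(z)⟩ + (λ₂/2)‖v‖². Then for all z, v ∈ ℝ^n: (1/2)(J(z) − J*) + (λ₂/4)‖v‖² ≤ V(z, v) ≤ (1 + λ₁ L)(J(z) − J*) + ((λ₁ + λ₂)/2)‖v‖². In particular V is nonnegative and vanishes only where J(z) = J* and v = 0. -/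
/-!
The descent lemma for an `L`-smooth `J`, applied at the gradient step `z - ∇J(z)/L`, gives
`‖∇J(z)‖² ≤ 2L (J(z) - J*)`. The cross term `λ₁⟪v, ∇J(z)⟫` is then absorbed by Young's inequality:
from below into `(J(z) - J*)/2 + λ₁²L‖v‖²`, where `4Lλ₁² ≤ 2λ₁ ≤ λ₂` because `λ₁ ≤ 1/(2L)` and
`λ₁ ≤ 1/(2η + c)`; from above into `λ₁L (J(z) - J*) + λ₁‖v‖²/2`.
-/

open scoped RealInnerProductSpace

variable {E : Type*} [NormedAddCommGroup E] [InnerProductSpace ℝ E]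

theorem neg_le_mul_inner_of_norm_sq_le {L a lam : ℝ} (hL : 0 < L) (hlam : 0 ≤ lam) (v : E) {w : E}
    (hw : ‖w‖ ^ 2 ≤ 2 * L * a) : -(a / 2 + lam ^ 2 * L * ‖v‖ ^ 2) ≤ lam * ⟪v, w⟫ := by
  have hcs := neg_le_of_abs_le (abs_real_inner_le_norm v w)
  have hw' : ‖w‖ ^ 2 / (4 * L) ≤ a / 2 := by
    rw [div_le_iff₀ (by positivity)]; linarith
  have hyoung : lam * (‖v‖ * ‖w‖) ≤ lam ^ 2 * L * ‖v‖ ^ 2 + ‖w‖ ^ 2 / (4 * L) := by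
    rw [← sub_nonneg]
    have : 0 ≤ (2 * lam * L * ‖v‖ - ‖w‖) ^ 2 / (4 * L) := by positivity
    convert this using 1
    field_simp
    ring
  nlinarith [mul_le_mul_of_nonneg_left hcs hlam]

theorem mul_inner_le_of_norm_sq_le {L a lam : ℝ} (hlam : 0 ≤ lam) (v : E) {w : E}
    (hw : ‖w‖ ^ 2 ≤ 2 * L * a) : lam * ⟪v, w⟫ ≤ lam * L * a + lam / 2 * ‖v‖ ^ 2 := by
  have hcs : ⟪v, w⟫ ≤ (‖v‖ ^ 2 + ‖w‖ ^ 2) / 2 :=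
    (real_inner_le_norm v w).trans (by nlinarith [sq_nonneg (‖v‖ - ‖w‖)])
  nlinarith [mul_le_mul_of_nonneg_left hcs hlam]

variable [CompleteSpace E] {f : E → ℝ}

theorem hasDerivAt_comp_add_smul (hf : Differentiable ℝ f) (x u : E) (t : ℝ) :
    HasDerivAt (fun s : ℝ => f (x + s • u)) ⟪gradient f (x + t • u), u⟫ t := by
  have hline : HasDerivAt (fun s : ℝ => x + s • u) u t := by
    simpa using ((hasDerivAt_id t).smul_const u).const_add x
  rw [inner_gradient_left]
  exact (hf _).hasFDerivAt.comp_hasDerivAt t hline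

theorem le_add_inner_gradient_add_half_mul_norm_sq (hf : Differentiable ℝ f) {L : ℝ}
    (hLip : ∀ x y, ‖gradient f x - gradient f y‖ ≤ L * ‖x - y‖) (x y : E) :
    f y ≤ f x + ⟪gradient f x, y - x⟫ + L / 2 * ‖y - x‖ ^ 2 := by
  set u := y - x
  have hderiv := hasDerivAt_comp_add_smul hf x u
  have hbound : ∀ t ∈ Set.Ico (0 : ℝ) 1,
      ⟪gradient f (x + t • u), u⟫ ≤ ⟪gradient f x, u⟫ + L * t * ‖u‖ ^ 2 := by
    intro t ht
    calc ⟪gradient f (x + t • u), u⟫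
        = ⟪gradient f x, u⟫ + ⟪gradient f (x + t • u) - gradient f x, u⟫ := by
          rw [inner_sub_left]; ring
      _ ≤ ⟪gradient f x, u⟫ + ‖gradient f (x + t • u) - gradient f x‖ * ‖u‖ := by
          gcongr; exact real_inner_le_norm _ _
      _ ≤ ⟪gradient f x, u⟫ + L * ‖t • u‖ * ‖u‖ := by
          gcongr; simpa using hLip (x + t • u) x
      _ = ⟪gradient f x, u⟫ + L * t * ‖u‖ ^ 2 := by
          rw [norm_smul, Real.norm_of_nonneg ht.1]; ring
  have hB : ∀ t : ℝ, HasDerivAt (fun s : ℝ => f x + s * ⟪gradient f x, u⟫ + L / 2 * s ^ 2 * ‖u‖ ^ 2)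
      (⟪gradient f x, u⟫ + L * t * ‖u‖ ^ 2) t := by
    intro t
    refine ((((hasDerivAt_id' t).mul_const _).const_add (f x)).add
      (((hasDerivAt_pow 2 t).const_mul (L / 2)).mul_const (‖u‖ ^ 2))).congr_deriv ?_
    push_cast; ring
  have key := image_le_of_deriv_right_le_deriv_boundary
    (fun t _ => (hderiv t).continuousAt.continuousWithinAt)
    (fun t _ => (hderiv t).hasDerivWithinAt) (by simp)
    (fun t _ => (hB t).continuousAt.continuousWithinAt)
    (fun t _ => (hB t).hasDerivWithinAt) hbound (Set.right_mem_Icc.2 zero_le_one)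
  simpa [u] using key

theorem norm_gradient_sq_le_two_mul_sub (hf : Differentiable ℝ f) {L : ℝ} (hL : 0 < L)
    (hLip : ∀ x y, ‖gradient f x - gradient f y‖ ≤ L * ‖x - y‖) {m : ℝ} (hm : ∀ y, m ≤ f y)
    (x : E) : ‖gradient f x‖ ^ 2 ≤ 2 * L * (f x - m) := by
  set g := gradient f x
  have hstep := le_add_inner_gradient_add_half_mul_norm_sq hf hLip x (x - L⁻¹ • g)
  have hdecrease : f (x - L⁻¹ • g) ≤ f x - ‖g‖ ^ 2 / (2 * L) := by
    rw [sub_sub_cancel_left, inner_neg_right, real_inner_smul_right, real_inner_self_eq_norm_sq,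
      norm_neg, norm_smul, Real.norm_of_nonneg (inv_nonneg.2 hL.le)] at hstep
    convert hstep using 1
    field_simp
    ring
  have := (hm _).trans hdecrease
  rw [sub_div' (by positivity), le_div_iff₀ (by positivity)] at this
  linarith

/-- sandwich bounds for the mixed Lyapunov function
`V(z,v) = J(z) − J* + λ₁⟨v, ∇J(z)⟩ + (λ₂/2)‖v‖²` of the heavy-ball method, where
`∇J` is globally `L`-Lipschitz, `J*` is the infimum of `J`,
`0 < λ₁ ≤ min{1/(2η+c), 1/(2L), c/(2(ηL+c²))}` and `λ₂ = (1 − λ₁ c)/η`. -/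
theorem stmt_4 (n : ℕ) (J : EuclideanSpace ℝ (Fin n) → ℝ)
    (hJ : Differentiable ℝ J)
    (L : ℝ) (hL : 0 < L)
    (hLip : ∀ z₁ z₂, ‖gradient J z₁ - gradient J z₂‖ ≤ L * ‖z₁ - z₂‖)
    (Jstar : ℝ) (hglb : IsGLB (Set.range J) Jstar)
    (η c : ℝ) (hη : 0 < η) (hc : 0 < c)
    (lam₁ : ℝ) (hlam₁pos : 0 < lam₁)
    (hlam₁le : lam₁ ≤ min (1 / (2 * η + c)) (min (1 / (2 * L)) (c / (2 * (η * L + c ^ 2)))))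
    (lam₂ : ℝ) (hlam₂ : lam₂ = (1 - lam₁ * c) / η)
    (V : EuclideanSpace ℝ (Fin n) → EuclideanSpace ℝ (Fin n) → ℝ)
    (hV : ∀ z v, V z v = J z - Jstar + lam₁ * ⟪v, gradient J z⟫ + (lam₂ / 2) * ‖v‖ ^ 2) :
    ∀ z v,
      ((1 / 2) * (J z - Jstar) + (lam₂ / 4) * ‖v‖ ^ 2 ≤ V z v ∧
        V z v ≤ (1 + lam₁ * L) * (J z - Jstar) + ((lam₁ + lam₂) / 2) * ‖v‖ ^ 2) ∧
      0 ≤ V z v ∧ (V z v = 0 → J z = Jstar ∧ v = 0) := by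
  have h₁ : lam₁ * (2 * η + c) ≤ 1 :=
    (le_div_iff₀ (by positivity)).1 (hlam₁le.trans (min_le_left _ _))
  have h₂ : lam₁ * (2 * L) ≤ 1 :=
    (le_div_iff₀ (by positivity)).1 (hlam₁le.trans ((min_le_right _ _).trans (min_le_left _ _)))
  have hlam₂_ge_two_mul : 2 * lam₁ ≤ lam₂ := by
    rw [hlam₂, le_div_iff₀ hη]; linarith
  have hlam₂_ge_four_mul : 4 * L * lam₁ ^ 2 ≤ lam₂ := by nlinarith
  intro z v
  have hlb : ∀ y, Jstar ≤ J y := fun y => hglb.1 ⟨y, rfl⟩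
  have hgrad := norm_gradient_sq_le_two_mul_sub hJ hL hLip hlb z
  have hlow : (1 / 2) * (J z - Jstar) + (lam₂ / 4) * ‖v‖ ^ 2 ≤ V z v := by
    rw [hV]
    nlinarith [neg_le_mul_inner_of_norm_sq_le hL hlam₁pos.le v hgrad,
      mul_le_mul_of_nonneg_right hlam₂_ge_four_mul (sq_nonneg ‖v‖)]
  have hup : V z v ≤ (1 + lam₁ * L) * (J z - Jstar) + ((lam₁ + lam₂) / 2) * ‖v‖ ^ 2 := by
    rw [hV]
    linarith [mul_inner_le_of_norm_sq_le hlam₁pos.le v hgrad]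
  have hgap : 0 ≤ J z - Jstar := sub_nonneg.2 (hlb z)
  have hvpos : 0 ≤ lam₂ / 4 * ‖v‖ ^ 2 := mul_nonneg (by linarith) (sq_nonneg _)
  refine ⟨⟨hlow, hup⟩, by linarith, fun hV0 => ⟨by linarith, ?_⟩⟩
  have : ‖v‖ ^ 2 = 0 := by nlinarith
  simpa using this
end

section
/- Suppose the dataset is nonseparable. Then the logistic loss J is coercive on ℝ^n, i.e., J(θ) → ∞ as ‖θ‖ → ∞. -/
open scoped RealInnerProductSpace
open Filter Real

/-! With `σ` the sigmoid, the loss of a labelled sample is the softplus `log (1 + exp m)` of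
its margin `m = (1 - 2y) θᵀx`, hence at least `max m 0`. The sum of the positive parts of the
margins is a continuous, positively homogeneous function of `θ`, and nonseparability says
exactly that it is positive off the origin; so on the unit sphere it is bounded below by some
`c > 0`, and by homogeneity `J θ ≥ c ‖θ‖ / N`. -/

section Homogeneous

variable {E : Type*} [NormedAddCommGroup E] [NormedSpace ℝ E] {f : E → ℝ}

lemma exists_pos_mul_norm_le_of_posHomogeneous [ProperSpace E] (hf : Continuous f)
    (hhom : ∀ t : ℝ, 0 ≤ t → ∀ v, f (t • v) = t * f v) (hpos : ∀ v, v ≠ 0 → 0 < f v) :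
    ∃ c > 0, ∀ v, c * ‖v‖ ≤ f v := by
  have hf0 : f 0 = 0 := by simpa using hhom 0 le_rfl 0
  rcases subsingleton_or_nontrivial E with hE | hE
  · exact ⟨1, one_pos, fun v => by simp [Subsingleton.elim v 0, hf0]⟩
  obtain ⟨u, hu, hmin⟩ := (isCompact_sphere (0 : E) 1).exists_isMinOn
    (NormedSpace.sphere_nonempty.mpr zero_le_one) hf.continuousOn
  have hu0 : u ≠ 0 := ne_zero_of_mem_sphere one_ne_zero ⟨u, hu⟩
  refine ⟨f u, hpos u hu0, fun v => ?_⟩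
  rcases eq_or_ne v 0 with rfl | hv
  · simp [hf0]
  have hnv : 0 < ‖v‖ := norm_pos_iff.mpr hv
  have hunit : ‖v‖⁻¹ • v ∈ Metric.sphere (0 : E) 1 := by
    simp [norm_smul, hnv.ne']
  calc f u * ‖v‖ ≤ f (‖v‖⁻¹ • v) * ‖v‖ := by gcongr; exact hmin hunit
    _ = f v := by
      rw [mul_comm, ← hhom _ hnv.le, smul_smul, mul_inv_cancel₀ hnv.ne', one_smul]

lemma tendsto_cocompact_atTop_of_posHomogeneous [ProperSpace E] (hf : Continuous f)
    (hhom : ∀ t : ℝ, 0 ≤ t → ∀ v, f (t • v) = t * f v) (hpos : ∀ v, v ≠ 0 → 0 < f v) :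
    Tendsto f (cocompact E) atTop := by
  obtain ⟨c, hc, hle⟩ := exists_pos_mul_norm_le_of_posHomogeneous hf hhom hpos
  exact tendsto_atTop_mono hle (tendsto_norm_cocompact_atTop.const_mul_atTop hc)

end Homogeneous

lemma max_le_log_one_add_exp (m : ℝ) : max m 0 ≤ log (1 + exp m) := by
  refine max_le ?_ (log_nonneg (by linarith [exp_pos m]))
  calc m = log (exp m) := (log_exp m).symm
    _ ≤ log (1 + exp m) := log_le_log (exp_pos m) (by linarith)

lemma logistic_loss_eq_log_one_add_exp {y : ℝ} (hy : y = 0 ∨ y = 1) (s : ℝ) :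
    -(y * log (1 / (1 + exp (-s))) + (1 - y) * log (1 - 1 / (1 + exp (-s)))) =
      log (1 + exp ((1 - 2 * y) * s)) := by
  have hsub : 1 - 1 / (1 + exp (-s)) = 1 / (1 + exp s) := by
    rw [exp_neg]; field_simp [(exp_pos s).ne']; ring
  rw [hsub]
  rcases hy with rfl | rfl <;> norm_num

lemma exists_margin_pos_of_nonseparable {E ι : Type*} [NormedAddCommGroup E]
    [InnerProductSpace ℝ E] {x : ι → E} {y : ι → ℝ}
    (hns : ¬ ∃ v : E, v ≠ 0 ∧ (∀ i, y i = 1 → 0 ≤ ⟪v, x i⟫) ∧ (∀ i, y i = 0 → ⟪v, x i⟫ ≤ 0))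
    {v : E} (hv : v ≠ 0) : ∃ i, 0 < (1 - 2 * y i) * ⟪v, x i⟫ := by
  by_contra! h
  refine hns ⟨v, hv, fun i hi => ?_, fun i hi => ?_⟩ <;> nlinarith [h i]

/-- if the dataset is nonseparable, the logistic loss is coercive on `ℝⁿ`. -/
theorem stmt_7 (n N : ℕ) (hN : 1 ≤ N)
    (x : Fin N → EuclideanSpace ℝ (Fin n)) (y : Fin N → ℝ)
    (hy : ∀ i, y i = 0 ∨ y i = 1)
    (σ : ℝ → ℝ) (hσ : ∀ s, σ s = 1 / (1 + Real.exp (-s)))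
    (J : EuclideanSpace ℝ (Fin n) → ℝ)
    (hJ : ∀ θ, J θ = -(1 / (N : ℝ)) * ∑ i, (y i * Real.log (σ ⟪θ, x i⟫) +
      (1 - y i) * Real.log (1 - σ ⟪θ, x i⟫)))
    (hns : ¬ ∃ v : EuclideanSpace ℝ (Fin n), v ≠ 0 ∧
      (∀ i, y i = 1 → 0 ≤ ⟪v, x i⟫) ∧ (∀ i, y i = 0 → ⟪v, x i⟫ ≤ 0)) :
    Filter.Tendsto J (Filter.cocompact (EuclideanSpace ℝ (Fin n))) Filter.atTop := by
  obtain rfl : σ = fun s => 1 / (1 + exp (-s)) := funext hσ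
  set S : EuclideanSpace ℝ (Fin n) → ℝ := fun θ => ∑ i, max ((1 - 2 * y i) * ⟪θ, x i⟫) 0
  have hS : Tendsto S (cocompact _) atTop := by
    refine tendsto_cocompact_atTop_of_posHomogeneous (by fun_prop) (fun t ht θ => ?_)
      (fun v hv => ?_)
    · simp only [S, Finset.mul_sum, mul_max_of_nonneg _ _ ht, real_inner_smul_left, mul_zero,
        mul_left_comm t]
    · obtain ⟨i, hi⟩ := exists_margin_pos_of_nonseparable hns hv
      exact Finset.sum_pos' (fun j _ => le_max_right _ _)
        ⟨i, Finset.mem_univ i, lt_max_of_lt_left hi⟩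
  have hN' : (0 : ℝ) < N := by exact_mod_cast hN
  refine tendsto_atTop_mono (fun θ => ?_) (hS.const_mul_atTop (one_div_pos.mpr hN'))
  rw [hJ, neg_mul, ← mul_neg, ← Finset.sum_neg_distrib]
  gcongr
  refine Finset.sum_le_sum fun i _ => ?_
  rw [logistic_loss_eq_log_one_add_exp (hy i)]
  exact max_le_log_one_add_exp _
end

section
/- Suppose the dataset is full rank and nonseparable, and let J* = inf_θ J(θ) (which is attained). Then the logistic loss satisfies the K-PL condition: there exists a class K function μ (i.e., μ : ℝ_{≥0} → ℝ_{≥0} continuous, strictly increasing, with μ(0) = 0) such that ‖∇J(θ)‖ ≥ μ( J(θ) − J* ) for all θ ∈ ℝ^n. -/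
/-!
The per-sample logistic loss is convex with derivative `sigmoid s - y`, so for `J θ₀ = J*` the
first-order condition of convexity gives `J θ - J* ≤ ‖∇J θ‖ ‖θ - θ₀‖`. Each per-sample loss
dominates `max ((1 - 2y) s) 0`; the sum of these over the data is continuous, positively
homogeneous and, by nonseparability, positive off the origin, so compactness of the unit sphere
gives `c ‖θ‖ ≤ J θ`. Then `c ‖θ - θ₀‖ ≤ (J θ - J*) + d` with `d = J* + c ‖θ₀‖ + 1`, and
`μ r = c r / (r + d)` works.
-/

open scoped RealInnerProductSpace

open Real Set

noncomputable def logisticLoss (y s : ℝ) : ℝ :=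
  -(y * log (sigmoid s) + (1 - y) * log (1 - sigmoid s))

theorem hasDerivAt_logisticLoss (y s : ℝ) :
    HasDerivAt (logisticLoss y) (sigmoid s - y) s := by
  have hσ := hasDerivAt_sigmoid s
  have hσ0 : sigmoid s ≠ 0 := (sigmoid_pos s).ne'
  have hσ1 : 1 - sigmoid s ≠ 0 := (sub_pos.2 (sigmoid_lt_one s)).ne'
  refine ((((hσ.log hσ0).const_mul y).fun_add
    (((hσ.const_sub 1).log hσ1).const_mul (1 - y))).fun_neg).congr_deriv ?_
  rw [mul_div_cancel_left₀ _ hσ0, neg_div, mul_div_cancel_right₀ _ hσ1]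
  ring

theorem differentiable_logisticLoss (y : ℝ) : Differentiable ℝ (logisticLoss y) :=
  fun s => (hasDerivAt_logisticLoss y s).differentiableAt

theorem convexOn_logisticLoss (y : ℝ) : ConvexOn ℝ univ (logisticLoss y) := by
  refine Monotone.convexOn_univ_of_deriv (differentiable_logisticLoss y) ?_
  simp only [funext fun s => (hasDerivAt_logisticLoss y s).deriv]
  exact fun a b hab => sub_le_sub_right (sigmoid_le hab) y

theorem log_sigmoid_le_min (s : ℝ) : log (sigmoid s) ≤ min s 0 := by
  refine le_min ?_ (log_nonpos (sigmoid_nonneg s) (sigmoid_le_one s))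
  calc log (sigmoid s) ≤ log (exp s) := by
        refine log_le_log (sigmoid_pos s) ?_
        rw [sigmoid_def, inv_le_comm₀ (by positivity) (exp_pos s), ← exp_neg]
        linarith [exp_pos (-s)]
    _ = s := log_exp s

theorem max_le_logisticLoss {y : ℝ} (hy : y = 0 ∨ y = 1) (s : ℝ) :
    max ((1 - 2 * y) * s) 0 ≤ logisticLoss y s := by
  have h₀ := log_sigmoid_le_min s
  have h₁ := log_sigmoid_le_min (-s)
  rw [sigmoid_neg] at h₁
  simp only [le_min_iff] at h₀ h₁
  rcases hy with rfl | rfl <;> simp only [logisticLoss] <;>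
    exact max_le (by linarith) (by linarith)

theorem convexOn_sum {𝕜 E β ι : Type*} [Semiring 𝕜] [PartialOrder 𝕜] [AddCommMonoid E]
    [AddCommMonoid β] [PartialOrder β] [IsOrderedAddMonoid β] [SMul 𝕜 E] [Module 𝕜 β]
    {s : Set E} (hs : Convex 𝕜 s) {f : ι → E → β} (t : Finset ι)
    (hf : ∀ i ∈ t, ConvexOn 𝕜 s (f i)) : ConvexOn 𝕜 s fun x => ∑ i ∈ t, f i x := by
  classical
  induction t using Finset.induction_on with
  | empty => simpa using convexOn_const 0 hs
  | insert i t hi ih =>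
    simp only [Finset.sum_insert hi]
    exact (hf i (t.mem_insert_self i)).add (ih fun j hj => hf j (Finset.mem_insert_of_mem hj))

theorem ConvexOn.add_apply_sub_le_of_hasFDerivAt {E : Type*} [NormedAddCommGroup E]
    [NormedSpace ℝ E] {f : E → ℝ} {f' : E →L[ℝ] ℝ} {x : E} (hf : ConvexOn ℝ univ f)
    (hx : HasFDerivAt f f' x) (y : E) : f x + f' (y - x) ≤ f y := by
  have hline : ConvexOn ℝ univ (f ∘ AffineMap.lineMap (k := ℝ) x y) := hf.comp_affineMap _
  have hderiv : HasDerivAt (f ∘ AffineMap.lineMap (k := ℝ) x y) (f' (y - x)) 0 := by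
    apply hx.comp_hasDerivAt_of_eq (0 : ℝ) AffineMap.hasDerivAt_lineMap
    simp
  have := hline.le_slope_of_hasDerivAt (mem_univ 0) (mem_univ 1) one_pos hderiv
  simp only [slope_def_field, Function.comp_apply, AffineMap.lineMap_apply_zero,
    AffineMap.lineMap_apply_one, sub_zero, div_one] at this
  linarith

def IsClassK (μ : ℝ → ℝ) : Prop :=
  ContinuousOn μ (Ici 0) ∧ StrictMonoOn μ (Ici 0) ∧ μ 0 = 0

theorem IsClassK.nonneg {μ : ℝ → ℝ} (hμ : IsClassK μ) {r : ℝ} (hr : 0 ≤ r) : 0 ≤ μ r := by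
  rw [← hμ.2.2]
  exact hμ.2.1.monotoneOn self_mem_Ici hr hr

theorem isClassK_mul_div_add {c d : ℝ} (hc : 0 < c) (hd : 0 < d) :
    IsClassK fun r => c * r / (r + d) := by
  refine ⟨?_, fun p hp q hq hpq => ?_, by simp⟩
  · exact ContinuousOn.div (by fun_prop) (by fun_prop) fun r (hr : 0 ≤ r) => by positivity
  · have hp : (0 : ℝ) ≤ p := hp
    rw [div_lt_div_iff₀ (by positivity) (by linarith)]
    nlinarith [mul_pos (mul_pos hc hd) (sub_pos.2 hpq)]

theorem ConvexOn.exists_isClassK_le_norm_gradient {E : Type*} [NormedAddCommGroup E]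
    [InnerProductSpace ℝ E] [CompleteSpace E] {f : E → ℝ} (hconv : ConvexOn ℝ univ f)
    (hdiff : Differentiable ℝ f) {c : ℝ} (hc : 0 < c) (hcoer : ∀ θ, c * ‖θ‖ ≤ f θ) (θ₀ : E) :
    ∃ μ, IsClassK μ ∧ ∀ θ, μ (f θ - f θ₀) ≤ ‖gradient f θ‖ := by
  have hf_nonneg : ∀ θ, 0 ≤ f θ := fun θ => (by positivity : 0 ≤ c * ‖θ‖).trans (hcoer θ)
  set d := f θ₀ + c * ‖θ₀‖ + 1 with hd_def
  have hd : 0 < d := by positivity [hf_nonneg θ₀]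
  refine ⟨fun r => c * r / (r + d), isClassK_mul_div_add hc hd, fun θ => ?_⟩
  set g := gradient f θ
  have hfirst : f θ - f θ₀ ≤ ‖g‖ * ‖θ₀ - θ‖ := by
    have h := hconv.add_apply_sub_le_of_hasFDerivAt (hdiff θ).hasFDerivAt θ₀
    rw [← inner_gradient_left] at h
    linarith [neg_le_of_abs_le (abs_real_inner_le_norm g (θ₀ - θ))]
  have hdist : c * ‖θ₀ - θ‖ ≤ f θ - f θ₀ + d := by
    nlinarith [norm_sub_le θ₀ θ, hcoer θ]
  have hpos : 0 < f θ - f θ₀ + d := by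
    nlinarith [hf_nonneg θ, mul_nonneg hc.le (norm_nonneg θ₀)]
  rw [div_le_iff₀ hpos]
  calc c * (f θ - f θ₀) ≤ c * (‖g‖ * ‖θ₀ - θ‖) := by gcongr
    _ = ‖g‖ * (c * ‖θ₀ - θ‖) := by ring
    _ ≤ ‖g‖ * (f θ - f θ₀ + d) := by gcongr

theorem exists_pos_mul_norm_le_of_continuous_of_homogeneous {E : Type*} [NormedAddCommGroup E]
    [NormedSpace ℝ E] [FiniteDimensional ℝ E] {g : E → ℝ} (hg : Continuous g)
    (hhom : ∀ t : ℝ, 0 ≤ t → ∀ v, g (t • v) = t * g v) (hpos : ∀ v ≠ 0, 0 < g v) :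
    ∃ c > 0, ∀ v, c * ‖v‖ ≤ g v := by
  have hg0 : g 0 = 0 := by simpa using hhom 0 le_rfl 0
  rcases subsingleton_or_nontrivial E with _ | _
  · exact ⟨1, one_pos, fun v => by simp [Subsingleton.elim v 0, hg0]⟩
  obtain ⟨u, hu, hmin⟩ := (isCompact_sphere (0 : E) 1).exists_isMinOn
    (NormedSpace.sphere_nonempty.2 zero_le_one) hg.continuousOn
  refine ⟨g u, hpos u (ne_zero_of_mem_unit_sphere ⟨u, hu⟩), fun v => ?_⟩
  rcases eq_or_ne v 0 with rfl | hv
  · simp [hg0]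
  have hvu : ‖v‖⁻¹ • v ∈ Metric.sphere (0 : E) 1 := by simp [norm_smul, hv]
  calc g u * ‖v‖ ≤ g (‖v‖⁻¹ • v) * ‖v‖ := by gcongr; exact hmin hvu
    _ = g v := by
      rw [hhom _ (by positivity), mul_comm, ← mul_assoc, mul_inv_cancel₀ (norm_ne_zero_iff.2 hv),
        one_mul]

theorem exists_pos_mul_norm_le_sum_max_inner {E ι : Type*} [NormedAddCommGroup E]
    [InnerProductSpace ℝ E] [FiniteDimensional ℝ E] [Fintype ι] (a : ι → E)
    (ha : ∀ v, (∀ i, ⟪v, a i⟫ ≤ 0) → v = 0) :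
    ∃ c > 0, ∀ v, c * ‖v‖ ≤ ∑ i, max ⟪v, a i⟫ 0 := by
  refine exists_pos_mul_norm_le_of_continuous_of_homogeneous (by fun_prop) (fun t ht v => ?_)
    fun v hv => ?_
  · simp only [inner_smul_left, conj_trivial, Finset.mul_sum, mul_max_of_nonneg _ _ ht, mul_zero]
  · refine lt_of_le_of_ne (Finset.sum_nonneg fun i _ => le_max_right _ _) fun h => hv (ha v ?_)
    intro i
    have := (Finset.sum_eq_zero_iff_of_nonneg fun i _ => le_max_right _ _).1 h.symm i
      (Finset.mem_univ i)
    exact max_eq_right_iff.1 this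

section LogisticRegression

variable {E ι : Type*} [NormedAddCommGroup E] [InnerProductSpace ℝ E] [Fintype ι]

def IsLinearlySeparable (x : ι → E) (y : ι → ℝ) : Prop :=
  ∃ v : E, v ≠ 0 ∧ (∀ i, y i = 1 → 0 ≤ ⟪v, x i⟫) ∧ (∀ i, y i = 0 → ⟪v, x i⟫ ≤ 0)

noncomputable def logisticRisk (x : ι → E) (y : ι → ℝ) (θ : E) : ℝ :=
  (Fintype.card ι : ℝ)⁻¹ * ∑ i, logisticLoss (y i) ⟪θ, x i⟫

theorem convexOn_logisticRisk (x : ι → E) (y : ι → ℝ) :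
    ConvexOn ℝ univ (logisticRisk x y) := by
  have hsum := convexOn_sum convex_univ Finset.univ fun i _ =>
    (convexOn_logisticLoss (y i)).comp_linearMap ((innerₛₗ ℝ).flip (x i))
  exact hsum.smul (c := (Fintype.card ι : ℝ)⁻¹) (by positivity)

theorem differentiable_logisticRisk (x : ι → E) (y : ι → ℝ) :
    Differentiable ℝ (logisticRisk x y) := by
  refine (Differentiable.fun_sum fun i _ => ?_).const_mul _
  exact (differentiable_logisticLoss (y i)).comp
    (differentiable_id.inner ℝ (differentiable_const _))

theorem exists_pos_mul_norm_le_logisticRisk [FiniteDimensional ℝ E] [Nonempty ι] {x : ι → E}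
    {y : ι → ℝ} (hy : ∀ i, y i = 0 ∨ y i = 1) (hns : ¬ IsLinearlySeparable x y) :
    ∃ c > 0, ∀ θ, c * ‖θ‖ ≤ logisticRisk x y θ := by
  -- `(1 - 2 y) • x` flips the positive examples, so a separator would make every term `≤ 0`.
  have hsep : ∀ v : E, (∀ i, ⟪v, (1 - 2 * y i) • x i⟫ ≤ 0) → v = 0 := by
    intro v hv
    by_contra hv0
    refine hns ⟨v, hv0, fun i hi => ?_, fun i hi => ?_⟩
    all_goals
      have := hv i
      rw [real_inner_smul_right, hi] at this
      linarith
  obtain ⟨c, hc, hcθ⟩ := exists_pos_mul_norm_le_sum_max_inner _ hsep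
  refine ⟨(Fintype.card ι : ℝ)⁻¹ * c, by positivity, fun θ => ?_⟩
  rw [mul_assoc, logisticRisk]
  gcongr
  refine (hcθ θ).trans (Finset.sum_le_sum fun i _ => ?_)
  rw [real_inner_smul_right]
  exact max_le_logisticLoss (hy i) ⟪θ, x i⟫

end LogisticRegression

theorem stmt_11_general (n N : ℕ) (hN : 1 ≤ N)
    (x : Fin N → EuclideanSpace ℝ (Fin n)) (y : Fin N → ℝ)
    (hy : ∀ i, y i = 0 ∨ y i = 1)
    (σ : ℝ → ℝ) (hσ : ∀ s, σ s = 1 / (1 + Real.exp (-s)))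
    (J : EuclideanSpace ℝ (Fin n) → ℝ)
    (hJ : ∀ θ, J θ = -(1 / (N : ℝ)) * ∑ i, (y i * Real.log (σ ⟪θ, x i⟫) +
      (1 - y i) * Real.log (1 - σ ⟪θ, x i⟫)))
    (hns : ¬ ∃ v : EuclideanSpace ℝ (Fin n), v ≠ 0 ∧
      (∀ i, y i = 1 → 0 ≤ ⟪v, x i⟫) ∧ (∀ i, y i = 0 → ⟪v, x i⟫ ≤ 0))
    (Jstar : ℝ) (hatt : ∃ θ, J θ = Jstar) :
    ∃ μ : ℝ → ℝ, ContinuousOn μ (Set.Ici (0 : ℝ)) ∧ StrictMonoOn μ (Set.Ici (0 : ℝ)) ∧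
      μ 0 = 0 ∧ (∀ r : ℝ, 0 ≤ r → 0 ≤ μ r) ∧
      ∀ θ : EuclideanSpace ℝ (Fin n), μ (J θ - Jstar) ≤ ‖gradient J θ‖ := by
  have : Nonempty (Fin N) := ⟨⟨0, hN⟩⟩
  have hσ_eq : σ = sigmoid := funext fun s => by rw [hσ, one_div, sigmoid_def]
  have hJ_eq : J = logisticRisk x y := by
    funext θ
    simp only [hJ, hσ_eq, logisticRisk, logisticLoss, Fintype.card_fin, Finset.sum_neg_distrib]
    ring
  subst hJ_eq
  obtain ⟨θ₀, rfl⟩ := hatt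
  obtain ⟨c, hc, hcoer⟩ := exists_pos_mul_norm_le_logisticRisk hy hns
  obtain ⟨μ, hμ, hle⟩ := (convexOn_logisticRisk x y).exists_isClassK_le_norm_gradient
    (differentiable_logisticRisk x y) hc hcoer θ₀
  exact ⟨μ, hμ.1, hμ.2.1, hμ.2.2, fun r => hμ.nonneg, hle⟩

/-- if the dataset is full rank and nonseparable, the logistic loss
satisfies the `K`-PL condition: there is a class-`K` function `μ`
(continuous, strictly increasing, `μ(0) = 0`, nonnegative on `ℝ≥0`) with
`‖∇J(θ)‖ ≥ μ(J(θ) − J*)` for all `θ`, where `J*` is the attained infimum of `J`. -/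
theorem stmt_11 (n N : ℕ) (hN : 1 ≤ N)
    (x : Fin N → EuclideanSpace ℝ (Fin n)) (y : Fin N → ℝ)
    (hy : ∀ i, y i = 0 ∨ y i = 1)
    (σ : ℝ → ℝ) (hσ : ∀ s, σ s = 1 / (1 + Real.exp (-s)))
    (J : EuclideanSpace ℝ (Fin n) → ℝ)
    (hJ : ∀ θ, J θ = -(1 / (N : ℝ)) * ∑ i, (y i * Real.log (σ ⟪θ, x i⟫) +
      (1 - y i) * Real.log (1 - σ ⟪θ, x i⟫)))
    (hfullrank : Submodule.span ℝ (Set.range x) = ⊤)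
    (hns : ¬ ∃ v : EuclideanSpace ℝ (Fin n), v ≠ 0 ∧
      (∀ i, y i = 1 → 0 ≤ ⟪v, x i⟫) ∧ (∀ i, y i = 0 → ⟪v, x i⟫ ≤ 0))
    (Jstar : ℝ) (hglb : IsGLB (Set.range J) Jstar) (hatt : ∃ θ, J θ = Jstar) :
    ∃ μ : ℝ → ℝ, ContinuousOn μ (Set.Ici (0 : ℝ)) ∧ StrictMonoOn μ (Set.Ici (0 : ℝ)) ∧
      μ 0 = 0 ∧ (∀ r : ℝ, 0 ≤ r → 0 ≤ μ r) ∧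
      ∀ θ : EuclideanSpace ℝ (Fin n), μ (J θ - Jstar) ≤ ‖gradient J θ‖ :=
  stmt_11_general n N hN x y hy σ hσ J hJ hns Jstar hatt
end

section
/- For every θ₀ ∈ ℝ^n and every v ∈ ℝ^n, lim_{r → ∞} (1/N) ∑_{i=1}^N ( σ((θ₀ + r v)ᵀx_i) − y_i ) (vᵀx_i) = (1/N) [ ∑_{i : y_i = 1} max(−vᵀx_i, 0) + ∑_{i : y_i = 0} max(vᵀx_i, 0) ]. -/
open Matrix Filter Topology Real

/-
Along the ray `θ₀ + r v` the `i`-th margin is `c + r a` with `a = vᵀxᵢ`, so `σ(c + r a) a`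
tends to `max a 0`: the sigmoid saturates to `1` or `0` according to the sign of `a`, and the
factor `a` kills the term when `a = 0`. Subtracting `yᵢ a` gives `max (-a) 0` for `yᵢ = 1` and
`max a 0` for `yᵢ = 0`.
-/

lemma tendsto_sigmoid_affine_mul (c a : ℝ) :
    Tendsto (fun r : ℝ => sigmoid (c + r * a) * a) atTop (𝓝 (max a 0)) := by
  rcases lt_trichotomy a 0 with ha | rfl | ha
  · have hline : Tendsto (fun r : ℝ => c + r * a) atTop atBot :=
      tendsto_atBot_add_const_left _ c (tendsto_id.atTop_mul_const_of_neg ha)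
    simpa [max_eq_right ha.le] using (tendsto_sigmoid_atBot.comp hline).mul_const a
  · simp
  · have hline : Tendsto (fun r : ℝ => c + r * a) atTop atTop :=
      tendsto_atTop_add_const_left _ c (tendsto_id.atTop_mul_const ha)
    simpa [max_eq_left ha.le] using (tendsto_sigmoid_atTop.comp hline).mul_const a

lemma max_sub_mul_of_binary {a y : ℝ} (hy : y = 0 ∨ y = 1) :
    max a 0 - y * a = if y = 1 then max (-a) 0 else max a 0 := by
  rcases hy with rfl | rfl
  · simp
  · rw [if_pos rfl, one_mul, ← max_sub_sub_right, sub_self, zero_sub, max_comm]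

theorem stmt_15_general (n N : ℕ)
    (x : Fin N → (Fin n → ℝ)) (y : Fin N → ℝ)
    (hy : ∀ i, y i = 0 ∨ y i = 1)
    (σ : ℝ → ℝ) (hσ : ∀ s, σ s = 1 / (1 + Real.exp (-s))) :
    ∀ θ₀ v : Fin n → ℝ,
      Filter.Tendsto
        (fun r : ℝ => (1 / (N : ℝ)) * ∑ i, (σ ((θ₀ + r • v) ⬝ᵥ x i) - y i) * (v ⬝ᵥ x i))
        Filter.atTop
        (nhds ((1 / (N : ℝ)) *
          (∑ i ∈ Finset.univ.filter (fun i => y i = 1), max (-(v ⬝ᵥ x i)) 0 +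
           ∑ i ∈ Finset.univ.filter (fun i => y i = 0), max (v ⬝ᵥ x i) 0))) := by
  intro θ₀ v
  have hσ_eq : σ = sigmoid := funext fun s => (hσ s).trans (one_div _)
  have hterm : ∀ i, Tendsto (fun r : ℝ => (σ ((θ₀ + r • v) ⬝ᵥ x i) - y i) * (v ⬝ᵥ x i))
      atTop (𝓝 (if y i = 1 then max (-(v ⬝ᵥ x i)) 0 else max (v ⬝ᵥ x i) 0)) := by
    intro i
    rw [← max_sub_mul_of_binary (hy i)]
    simp only [hσ_eq, add_dotProduct, smul_dotProduct, smul_eq_mul, sub_mul]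
    exact (tendsto_sigmoid_affine_mul _ _).sub_const _
  have hlabel : Finset.univ.filter (fun i => ¬y i = 1) = Finset.univ.filter (fun i => y i = 0) :=
    Finset.filter_congr fun i _ => by rcases hy i with h | h <;> simp [h]
  rw [← hlabel, ← Finset.sum_ite]
  exact (tendsto_finsetSum _ fun i _ => hterm i).const_mul _

/-- the directional derivative of the logistic loss along `v` at `θ₀ + r v`
converges, as `r → ∞`, to
`(1/N) (∑_{i : yᵢ = 1} max(−vᵀxᵢ, 0) + ∑_{i : yᵢ = 0} max(vᵀxᵢ, 0))`. -/
theorem stmt_15 (n N : ℕ) (hN : 1 ≤ N)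
    (x : Fin N → (Fin n → ℝ)) (y : Fin N → ℝ)
    (hy : ∀ i, y i = 0 ∨ y i = 1)
    (σ : ℝ → ℝ) (hσ : ∀ s, σ s = 1 / (1 + Real.exp (-s))) :
    ∀ θ₀ v : Fin n → ℝ,
      Filter.Tendsto
        (fun r : ℝ => (1 / (N : ℝ)) * ∑ i, (σ ((θ₀ + r • v) ⬝ᵥ x i) - y i) * (v ⬝ᵥ x i))
        Filter.atTop
        (nhds ((1 / (N : ℝ)) *
          (∑ i ∈ Finset.univ.filter (fun i => y i = 1), max (-(v ⬝ᵥ x i)) 0 +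
           ∑ i ∈ Finset.univ.filter (fun i => y i = 0), max (v ⬝ᵥ x i) 0))) :=
  stmt_15_general n N x y hy σ hσ
end
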